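/- Let C_1,...,C_K be a (K,K,N)-CCC (each C_i a K×N matrix with unimodular complex entries such that the aperiodic autocorrelation sum Λ(C_i)(τ) = 0 for all τ ≠ 0, and the aperiodic cross-correlation sum Λ(C_i,C_j)(τ) = 0 for all τ whenever i ≠ j), and let b be a unimodular sequence of length P. Define Z_i as the K×NP matrix whose rows are the Kronecker products of the rows of C_i with b. Then {Z_1,...,Z_K} is a type-II (K,K,NP-P+1,NP)-ZCCS: Λ(Z_i)(τ) = 0 for P-1 < |τ| < NP, and Λ(Z_i,Z_j)(τ) = 0 for all |τ| < NP when i ≠ j. -/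

import Mathlib

open Finset

/-- Aperiodic cross-correlation of length-`L` sequences `x, y` at integer shift `τ`. -/
noncomputable def acc (L : ℕ) (x y : ℕ → ℂ) (τ : ℤ) : ℂ :=
  if 0 ≤ τ ∧ τ < (L : ℤ) then
    ∑ i ∈ Finset.range (L - τ.toNat), x (i + τ.toNat) * (starRingEnd ℂ) (y i)
  else if -(L : ℤ) < τ ∧ τ < 0 then
    ∑ i ∈ Finset.range (L - (-τ).toNat), x i * (starRingEnd ℂ) (y (i + (-τ).toNat))
  else 0

/-- Aperiodic autocorrelation. -/
noncomputable def aac (L : ℕ) (x : ℕ → ℂ) (τ : ℤ) : ℂ := acc L x x τ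

/-- Kronecker product of a sequence with a length-`P` sequence: `(a ⊗ b)_(nP+p) = a_n b_p`. -/
noncomputable def kron (P : ℕ) (a b : ℕ → ℂ) : ℕ → ℂ := fun n => a (n / P) * b (n % P)

/-- Aperiodic cross-correlation sum of two codes (row-wise sum). -/
noncomputable def ccs {M : ℕ} (L : ℕ) (A B : Fin M → ℕ → ℂ) (τ : ℤ) : ℂ :=
  ∑ ν, acc L (A ν) (B ν) τ

lemma acc_pos_eq (L : ℕ) (x y : ℕ → ℂ) (s : ℕ) :
    acc L x y (s : ℤ) = ∑ i ∈ Finset.range (L - s), x (i + s) * (starRingEnd ℂ) (y i) := by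
  unfold acc
  split_ifs with h1 h2
  · simp
  · exfalso; omega
  · rw [show L - s = 0 from by omega]; simp

lemma acc_neg_eq (L : ℕ) (x y : ℕ → ℂ) (s : ℕ) :
    acc L x y (-(s : ℤ)) = ∑ i ∈ Finset.range (L - s), x i * (starRingEnd ℂ) (y (i + s)) := by
  unfold acc
  split_ifs with h1 h2
  · have hs : s = 0 := by omega
    subst hs; simp
  · simp
  · rw [show L - s = 0 from by omega]; simp

lemma acc_conj (L : ℕ) (x y : ℕ → ℂ) (τ : ℤ) :
    acc L x y (-τ) = (starRingEnd ℂ) (acc L y x τ) := by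
  obtain ⟨s, rfl | rfl⟩ := Int.eq_nat_or_neg τ
  · rw [acc_neg_eq, acc_pos_eq, map_sum]
    refine Finset.sum_congr rfl fun i _ => ?_
    simp [mul_comm]
  · rw [neg_neg, acc_pos_eq, acc_neg_eq, map_sum]
    refine Finset.sum_congr rfl fun i _ => ?_
    simp [mul_comm]

lemma ccs_conj {M : ℕ} (L : ℕ) (A B : Fin M → ℕ → ℂ) (τ : ℤ) :
    ccs L A B (-τ) = (starRingEnd ℂ) (ccs L B A τ) := by
  unfold ccs
  rw [map_sum]
  exact Finset.sum_congr rfl fun ν _ => acc_conj L (A ν) (B ν) τ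

lemma sum_range_mul (g : ℕ → ℂ) (m P : ℕ) :
    ∑ i ∈ Finset.range (m * P), g i = ∑ n ∈ Finset.range m, ∑ p ∈ Finset.range P, g (n * P + p) := by
  induction m with
  | zero => simp
  | succ m ih => rw [Nat.succ_mul, Finset.sum_range_add, ih, Finset.sum_range_succ]

lemma kron_apply (P : ℕ) (hP : 0 < P) (a b : ℕ → ℂ) (n p : ℕ) (hp : p < P) :
    kron P a b (P * n + p) = a n * b p := by
  unfold kron
  rw [Nat.mul_add_div hP, Nat.mul_add_mod, Nat.div_eq_of_lt hp, Nat.mod_eq_of_lt hp, add_zero]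

lemma acc_kron (N P : ℕ) (hP : 0 < P) (a c b : ℕ → ℂ) (t : ℕ) (ht : t < N * P) :
    acc (N * P) (kron P a b) (kron P c b) (t : ℤ)
      = acc N a c ((t / P : ℕ) : ℤ) * acc P b b ((t % P : ℕ) : ℤ)
        + acc N a c (((t / P : ℕ) : ℤ) + 1) * acc P b b (((t % P : ℕ) : ℤ) - (P : ℤ)) := by
  set q := t / P with hqdef
  set r := t % P with hrdef
  have htqr : t = P * q + r := (Nat.div_add_mod t P).symm
  have hrP : r < P := Nat.mod_lt _ hP
  have hqN : q < N := (Nat.div_lt_iff_lt_mul hP).mpr ht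
  obtain ⟨m, hm⟩ : ∃ m, N = m + q + 1 := ⟨N - q - 1, by omega⟩
  subst hm
  have e2 : ((r : ℤ) - (P : ℤ)) = -(((P - r : ℕ) : ℤ)) := by omega
  have hq1 : ((q : ℤ) + 1) = ((q + 1 : ℕ) : ℤ) := by push_cast; ring
  rw [e2, hq1, acc_pos_eq, acc_pos_eq, acc_pos_eq, acc_pos_eq, acc_neg_eq]
  have hN1 : m + q + 1 - q = m + 1 := by omega
  have hN2 : m + q + 1 - (q + 1) = m := by omega
  have hPr : P - (P - r) = r := by omega
  rw [hN1, hN2, hPr]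
  have hNP : (m + q + 1) * P - t = m * P + (P - r) := by
    have h1 : (m + q + 1) * P = m * P + q * P + P := by ring
    have h2 : P * q = q * P := mul_comm P q
    rw [h1, htqr, h2]
    generalize m * P = X
    generalize q * P = Y
    omega
  rw [hNP, Finset.sum_range_add, sum_range_mul]
  have hsplit : ∀ n ∈ Finset.range m,
      (∑ p ∈ Finset.range P, kron P a b (n * P + p + t) * (starRingEnd ℂ) (kron P c b (n * P + p)))
      = (∑ p ∈ Finset.range (P - r),
          (a (n + q) * (starRingEnd ℂ) (c n)) * (b (p + r) * (starRingEnd ℂ) (b p)))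
        + ∑ j ∈ Finset.range r,
          (a (n + (q + 1)) * (starRingEnd ℂ) (c n)) * (b j * (starRingEnd ℂ) (b (j + (P - r)))) := by
    intro n _
    rw [show Finset.range P = Finset.range ((P - r) + r) from by rw [Nat.sub_add_cancel hrP.le],
      Finset.sum_range_add]
    congr 1
    · refine Finset.sum_congr rfl fun p hp => ?_
      rw [Finset.mem_range] at hp
      rw [show n * P + p + t = P * (n + q) + (p + r) from by rw [htqr]; ring,
        show n * P + p = P * n + p from by ring,
        kron_apply P hP _ _ _ _ (by omega), kron_apply P hP _ _ _ _ (by omega), map_mul]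
      ring
    · refine Finset.sum_congr rfl fun j hj => ?_
      rw [Finset.mem_range] at hj
      rw [show n * P + (P - r + j) + t = P * (n + (q + 1)) + j from by rw [htqr, show P * (n + (q + 1)) = n * P + P * q + P from by ring]; omega,
        show n * P + (P - r + j) = P * n + (P - r + j) from by ring,
        kron_apply P hP _ _ _ _ (by omega), kron_apply P hP _ _ _ _ (by omega), map_mul]
      ring
  rw [Finset.sum_congr rfl hsplit, Finset.sum_add_distrib, Finset.sum_range_succ,
    add_mul, Finset.sum_mul, Finset.sum_mul]
  have hlast : (∑ p ∈ Finset.range (P - r),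
      kron P a b (m * P + p + t) * (starRingEnd ℂ) (kron P c b (m * P + p)))
      = ∑ p ∈ Finset.range (P - r),
          (a (m + q) * (starRingEnd ℂ) (c m)) * (b (p + r) * (starRingEnd ℂ) (b p)) := by
    refine Finset.sum_congr rfl fun p hp => ?_
    rw [Finset.mem_range] at hp
    rw [show m * P + p + t = P * (m + q) + (p + r) from by rw [htqr]; ring,
      show m * P + p = P * m + p from by ring,
      kron_apply P hP _ _ _ _ (by omega), kron_apply P hP _ _ _ _ (by omega), map_mul]
    ring
  rw [hlast]
  simp only [Finset.mul_sum]
  ring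

lemma ccs_kron {K : ℕ} (N P : ℕ) (hP : 0 < P) (A B : Fin K → ℕ → ℂ) (b : ℕ → ℂ)
    (t : ℕ) (ht : t < N * P) :
    ccs (N * P) (fun ν => kron P (A ν) b) (fun ν => kron P (B ν) b) (t : ℤ)
      = ccs N A B ((t / P : ℕ) : ℤ) * acc P b b ((t % P : ℕ) : ℤ)
        + ccs N A B (((t / P : ℕ) : ℤ) + 1) * acc P b b (((t % P : ℕ) : ℤ) - (P : ℤ)) := by
  unfold ccs
  rw [Finset.sum_congr rfl (fun ν _ => acc_kron N P hP (A ν) (B ν) b t ht),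
    Finset.sum_add_distrib, ← Finset.sum_mul, ← Finset.sum_mul]

theorem stmt3 (K N P : ℕ) (C : Fin K → Fin K → ℕ → ℂ)
    (hU : ∀ i ν, ∀ n < N, ‖C i ν n‖ = 1)
    (hauto : ∀ i, ∀ τ : ℤ, τ ≠ 0 → ccs N (C i) (C i) τ = 0)
    (hcross : ∀ i j, i ≠ j → ∀ τ : ℤ, ccs N (C i) (C j) τ = 0)
    (b : ℕ → ℂ) (hb : ∀ p < P, ‖b p‖ = 1)
    (Z : Fin K → Fin K → ℕ → ℂ) (hZ : ∀ i ν, Z i ν = kron P (C i ν) b) :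
    (∀ i, ∀ τ : ℤ, (P : ℤ) - 1 < |τ| → |τ| < (N : ℤ) * P →
        ccs (N * P) (Z i) (Z i) τ = 0) ∧
    (∀ i j, i ≠ j → ∀ τ : ℤ, |τ| < (N : ℤ) * P →
        ccs (N * P) (Z i) (Z j) τ = 0) := by
  have hZeq : ∀ i, Z i = fun ν => kron P (C i ν) b := fun i => funext (hZ i)
  have hcast : ((N * P : ℕ) : ℤ) = (N : ℤ) * P := by push_cast; ring
  constructor
  · intro i τ h1 h2
    have hNP : 0 < N * P := by
      have h0 : (0 : ℤ) < (N : ℤ) * P := lt_of_le_of_lt (abs_nonneg τ) h2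
      rw [← hcast] at h0
      exact_mod_cast h0
    have hP : 0 < P := Nat.pos_of_ne_zero (by rintro rfl; simp at hNP)
    have key : ∀ t : ℕ, (P : ℤ) - 1 < (t : ℤ) → t < N * P →
        ccs (N * P) (Z i) (Z i) (t : ℤ) = 0 := by
      intro t ht1 ht2
      have htP : P ≤ t := by omega
      have hq : 0 < t / P := (Nat.one_le_div_iff hP).mpr htP
      have h3 : ccs N (C i) (C i) ((t / P : ℕ) : ℤ) = 0 := hauto i _ (by exact_mod_cast hq.ne')
      have h4 : ccs N (C i) (C i) (((t / P : ℕ) : ℤ) + 1) = 0 := hauto i _ (by omega)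
      rw [hZeq i, ccs_kron N P hP _ _ b t ht2, h3, h4, zero_mul, zero_mul, add_zero]
    rcases le_or_gt 0 τ with hτ | hτ
    · rw [abs_of_nonneg hτ] at h1 h2
      rw [← hcast] at h2
      rw [show τ = ((τ.toNat : ℕ) : ℤ) from (Int.toNat_of_nonneg hτ).symm]
      exact key τ.toNat (by omega) (by omega)
    · rw [abs_of_neg hτ] at h1 h2
      rw [← hcast] at h2
      have e : ccs (N * P) (Z i) (Z i) τ = (starRingEnd ℂ) (ccs (N * P) (Z i) (Z i) (-τ)) := by
        conv_lhs => rw [← neg_neg τ]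
        rw [ccs_conj]
      rw [e, show -τ = (((-τ).toNat : ℕ) : ℤ) from (Int.toNat_of_nonneg (by omega)).symm,
        key (-τ).toNat (by omega) (by omega), map_zero]
  · intro i j hij τ h2
    have hNP : 0 < N * P := by
      have h0 : (0 : ℤ) < (N : ℤ) * P := lt_of_le_of_lt (abs_nonneg τ) h2
      rw [← hcast] at h0
      exact_mod_cast h0
    have hP : 0 < P := Nat.pos_of_ne_zero (by rintro rfl; simp at hNP)
    have key : ∀ i' j', i' ≠ j' → ∀ t : ℕ, t < N * P →
        ccs (N * P) (Z i') (Z j') (t : ℤ) = 0 := by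
      intro i' j' hij' t ht2
      rw [hZeq i', hZeq j', ccs_kron N P hP _ _ b t ht2, hcross i' j' hij', hcross i' j' hij',
        zero_mul, zero_mul, add_zero]
    rcases le_or_gt 0 τ with hτ | hτ
    · rw [abs_of_nonneg hτ] at h2
      rw [← hcast] at h2
      rw [show τ = ((τ.toNat : ℕ) : ℤ) from (Int.toNat_of_nonneg hτ).symm]
      exact key i j hij τ.toNat (by omega)
    · rw [abs_of_neg hτ] at h2
      rw [← hcast] at h2
      have e : ccs (N * P) (Z i) (Z j) τ = (starRingEnd ℂ) (ccs (N * P) (Z j) (Z i) (-τ)) := by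
        conv_lhs => rw [← neg_neg τ]
        rw [ccs_conj]
      rw [e, show -τ = (((-τ).toNat : ℕ) : ℤ) from (Int.toNat_of_nonneg (by omega)).symm,
        key j i hij.symm (-τ).toNat (by omega), map_zero]
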